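/- Let ω > 0 be a real number and n ≥ 1 an integer. Then for every z ∈ ℂ, S_n^{ω+1}(z) = S_n^ω(z) + (n²/((ω+n)(ω+n+1)))·S_{n−1}^ω(z). -/

import Mathlib

open Finset Polynomial

/-- The monic skyburst polynomial
`S_n^ω(z) = Σ_{ℓ=0}^n binom(n,ℓ) · (−ω)_ℓ/(−n−ω)_ℓ · z^{n−ℓ}`,
where `(a)_ℓ` is the Pochhammer (rising factorial) symbol. -/
noncomputable def skyburst (n : ℕ) (ω : ℝ) (z : ℂ) : ℂ :=
  ∑ ℓ ∈ Finset.range (n + 1),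
    (n.choose ℓ : ℂ) *
      ((ascPochhammer ℂ ℓ).eval (-(ω : ℂ)) / (ascPochhammer ℂ ℓ).eval (-(n : ℂ) - (ω : ℂ))) *
      z ^ (n - ℓ)

variable {K : Type*} [Field K]

lemma ascPochhammer_succ_eval_left (n : ℕ) (x : K) :
    (ascPochhammer K (n + 1)).eval x = x * (ascPochhammer K n).eval (x + 1) := by
  simp [ascPochhammer_succ_left, eval_comp]

lemma ascPochhammer_eval_neg_natCast_sub_ne_zero {m ℓ : ℕ} {w : K} (hℓ : ℓ ≤ m)
    (hw : ∀ k < m, w + k + 1 ≠ 0) : (ascPochhammer K ℓ).eval (-m - w) ≠ 0 := by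
  rw [Ne, ascPochhammer_eval_eq_zero_iff]
  rintro ⟨k, hk, hkw⟩
  refine hw (m - 1 - k) (by omega) ?_
  rw [Nat.cast_sub (by omega), Nat.cast_sub (by omega)]
  linear_combination -hkw

noncomputable def skyburstCoeff (n ℓ : ℕ) (w : K) : K :=
  n.choose ℓ * ((ascPochhammer K ℓ).eval (-w) / (ascPochhammer K ℓ).eval (-n - w))

noncomputable def skyburstEval (n : ℕ) (w z : K) : K :=
  ∑ ℓ ∈ range (n + 1), skyburstCoeff n ℓ w * z ^ (n - ℓ)

lemma skyburstCoeff_zero (n : ℕ) (w : K) : skyburstCoeff n 0 w = 1 := by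
  simp [skyburstCoeff]

/- With `a = w + n + 1`, the relations `(n + 1) C(n, ℓ) = C(n + 1, ℓ + 1) (ℓ + 1)` and
`a (-n - w)_ℓ = (-a)_ℓ (a - ℓ)` reduce the claim to the scalar identity
`(w + 1)(a - ℓ) = (w - ℓ)(a + 1) + (n + 1)(ℓ + 1)`. -/
lemma skyburstCoeff_succ_add_one {n ℓ : ℕ} {w : K} (hw : ∀ k < n + 2, w + k + 1 ≠ 0)
    (hℓ : ℓ ≤ n) :
    skyburstCoeff (n + 1) (ℓ + 1) (w + 1) =
      skyburstCoeff (n + 1) (ℓ + 1) w +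
        (n + 1) ^ 2 / ((w + n + 1) * (w + n + 2)) * skyburstCoeff n ℓ w := by
  have hQ : (ascPochhammer K ℓ).eval (-(n + 1 : ℕ) - w) ≠ 0 :=
    ascPochhammer_eval_neg_natCast_sub_ne_zero (by omega) fun k hk => hw k (by omega)
  have hQ' : (ascPochhammer K ℓ).eval (-n - w) ≠ 0 :=
    ascPochhammer_eval_neg_natCast_sub_ne_zero hℓ fun k hk => hw k (by omega)
  have hC : ((n + 1 : ℕ) : K) * n.choose ℓ = (n + 1).choose (ℓ + 1) * (ℓ + 1 : ℕ) := by
    rw [← Nat.cast_mul, ← Nat.cast_mul, Nat.add_one_mul_choose_eq]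
  have hQQ' : (-(n + 1 : ℕ) - w) * (ascPochhammer K ℓ).eval (-n - w) =
      (ascPochhammer K ℓ).eval (-(n + 1 : ℕ) - w) * (-(n + 1 : ℕ) - w + ℓ) := by
    rw [← ascPochhammer_succ_eval, ascPochhammer_succ_eval_left]
    push_cast
    ring_nf
  have hP₁ : (ascPochhammer K (ℓ + 1)).eval (-(w + 1)) =
      -(w + 1) * (ascPochhammer K ℓ).eval (-w) := by
    rw [ascPochhammer_succ_eval_left]
    ring_nf
  have hQ₁ : (ascPochhammer K (ℓ + 1)).eval (-(n + 1 : ℕ) - (w + 1)) =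
      (-(n + 1 : ℕ) - (w + 1)) * (ascPochhammer K ℓ).eval (-(n + 1 : ℕ) - w) := by
    rw [ascPochhammer_succ_eval_left]
    ring_nf
  simp only [skyburstCoeff, hP₁, hQ₁, ascPochhammer_succ_eval]
  generalize (ascPochhammer K ℓ).eval (-w) = P at *
  generalize (ascPochhammer K ℓ).eval (-n - w) = Q' at *
  generalize (ascPochhammer K ℓ).eval (-(n + 1 : ℕ) - w) = Q at *
  push_cast at *
  have h₀ : w + n + 1 ≠ 0 := by simpa using hw n (by omega)
  have h₁ : w + n + 2 ≠ 0 := fun h => hw (n + 1) (by omega) (by push_cast; linear_combination h)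
  have h₂ : -(n + 1 : K) - (w + 1) ≠ 0 := fun h => h₁ (by linear_combination -h)
  have h₃ : -(n + 1 : K) - w + ℓ ≠ 0 := fun h =>
    hw (n - ℓ) (by omega) (by rw [Nat.cast_sub hℓ]; linear_combination -h)
  field_simp
  linear_combination (w + n + 2) * (n + 1) * P *
    (-(Q * (w + n + 1 - ℓ)) * hC - ((n + 1).choose (ℓ + 1) : K) * (ℓ + 1) * hQQ')

theorem skyburstEval_succ_add_one {n : ℕ} {w : K} (hw : ∀ k < n + 2, w + k + 1 ≠ 0) (z : K) :
    skyburstEval (n + 1) (w + 1) z =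
      skyburstEval (n + 1) w z +
        (n + 1) ^ 2 / ((w + n + 1) * (w + n + 2)) * skyburstEval n w z := by
  simp only [skyburstEval]
  rw [sum_range_succ', sum_range_succ' _ (n + 1), mul_sum]
  have hterm : ∀ ℓ ∈ range (n + 1),
      skyburstCoeff (n + 1) (ℓ + 1) (w + 1) * z ^ (n + 1 - (ℓ + 1)) =
        skyburstCoeff (n + 1) (ℓ + 1) w * z ^ (n + 1 - (ℓ + 1)) +
          (n + 1) ^ 2 / ((w + n + 1) * (w + n + 2)) * (skyburstCoeff n ℓ w * z ^ (n - ℓ)) := by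
    intro ℓ hℓ
    rw [skyburstCoeff_succ_add_one hw (Nat.lt_succ_iff.mp (mem_range.mp hℓ)),
      Nat.add_sub_add_right]
    ring
  rw [sum_congr rfl hterm, sum_add_distrib, skyburstCoeff_zero, skyburstCoeff_zero]
  ring

lemma skyburst_eq_skyburstEval (n : ℕ) (ω : ℝ) (z : ℂ) :
    skyburst n ω z = skyburstEval n (ω : ℂ) z :=
  rfl

theorem skyburst_parameter_lift_recurrence (ω : ℝ) (hω : 0 < ω) (n : ℕ) (hn : 1 ≤ n) (z : ℂ) :
    skyburst n (ω + 1) z =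
      skyburst n ω z +
        ((n : ℂ) ^ 2 / (((ω : ℂ) + (n : ℂ)) * ((ω : ℂ) + (n : ℂ) + 1))) *
          skyburst (n - 1) ω z := by
  obtain ⟨m, rfl⟩ := Nat.exists_eq_add_of_le' hn
  have hω' : ∀ k < m + 2, (ω : ℂ) + k + 1 ≠ 0 := fun k _ => by
    exact_mod_cast (by positivity : ω + k + 1 ≠ 0)
  simp only [skyburst_eq_skyburstEval, Complex.ofReal_add, Complex.ofReal_one, Nat.add_sub_cancel,
    skyburstEval_succ_add_one hω']
  push_cast
  ring
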